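/- arXiv:1807.01260 — 3 statements merged into one kernel-verified Lean document; each statement's English description precedes it below -/
import Mathlib

section
/- Let γ be a center of T w.r.t. c and let a, b be the endpoints of a diametral path P of T w.r.t. c. Then γ is a center of P, i.e., γ lies on the path P between a and b, and γ minimizes max{d_T(u,a) + c(a), d_T(u,b) + c(b)} over all vertices u of P. -/
/-! Projecting onto the path from `a` to `b` shows that trees satisfy the four-point condition
`d(u,y) + d(a,b) ≤ max (d(u,a) + d(y,b)) (d(u,b) + d(y,a))`. Together with the diametrality of
`(a, b)` against `(a, y)` and `(y, b)` it shows that every eccentricity is attained at `a` or `b`: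
`ecc u = max (d(u,a) + c a) (d(u,b) + c b)`. This gives the minimality of `γ` at once, and if `γ`
were off the path, its nearest vertex `m` on the path would have `ecc m = ecc γ - d(γ,m)`. -/

open SimpleGraph

/-- `mid` lies on the (unique) path between `u` and `v` in the tree `T`. -/
def OnPath {V : Type*} (T : SimpleGraph V) (u mid v : V) : Prop :=
  T.dist u mid + T.dist mid v = T.dist u v

namespace SimpleGraph

variable {V : Type*} {G : SimpleGraph V}

lemma Walk.IsPath.append {u v w : V} {p : G.Walk u v} {q : G.Walk v w} (hp : p.IsPath)
    (hq : q.IsPath) (hpq : ∀ x ∈ p.support, x ∈ q.support → x = v) : (p.append q).IsPath := by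
  rw [Walk.isPath_def, Walk.support_append]
  have hq' := hq.support_nodup
  rw [← q.cons_tail_support, List.nodup_cons] at hq'
  refine hp.support_nodup.append hq'.2 fun x hxp hxq ↦ ?_
  obtain rfl := hpq x hxp (List.mem_of_mem_tail hxq)
  exact hq'.1 hxq

lemma IsAcyclic.length_eq_dist (hG : G.IsAcyclic) {u v : V} {p : G.Walk u v} (hp : p.IsPath) :
    p.length = G.dist u v := by
  obtain ⟨q, hq, hlen⟩ := p.reachable.exists_path_of_dist
  have : (⟨p, hp⟩ : G.Path u v) = ⟨q, hq⟩ := (hG.subsingleton_path u v).elim _ _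
  rw [← hlen, show p = q from congrArg Subtype.val this]

lemma IsAcyclic.onPath_of_isPath_append (hG : G.IsAcyclic) {u v w : V} {p : G.Walk u v}
    {q : G.Walk v w} (hpq : (p.append q).IsPath) : OnPath G u v w := by
  rw [OnPath, ← hG.length_eq_dist hpq.of_append_left, ← hG.length_eq_dist hpq.of_append_right,
    ← hG.length_eq_dist hpq, Walk.length_append]

lemma IsAcyclic.onPath_of_mem_support (hG : G.IsAcyclic) {u v x : V} {p : G.Walk u v}
    (hp : p.IsPath) (hx : x ∈ p.support) : OnPath G u x v := by
  classical
  exact hG.onPath_of_isPath_append ((p.take_spec hx).symm ▸ hp)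

lemma IsAcyclic.onPath_or_onPath (hG : G.IsAcyclic) {a b m n : V} {P : G.Walk a b}
    (hP : P.IsPath) (hm : m ∈ P.support) (hn : n ∈ P.support) :
    OnPath G a n m ∨ OnPath G m n b := by
  classical
  rw [← P.take_spec hm, Walk.mem_support_append_iff] at hn
  exact hn.imp (hG.onPath_of_mem_support (hP.takeUntil hm))
    (hG.onPath_of_mem_support (hP.dropUntil hm))

/-- The vertex of `P` closest to `u` works: the path from `u` to it meets `P` only there. -/
lemma IsTree.exists_mem_support_onPath (hG : G.IsTree) {a b : V} {P : G.Walk a b}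
    (hP : P.IsPath) (u : V) :
    ∃ m ∈ P.support, OnPath G u m a ∧ OnPath G u m b := by
  classical
  obtain ⟨m, hmP, hmin⟩ :=
    P.support.toFinset.exists_min_image (G.dist u) ⟨a, by simp⟩
  rw [List.mem_toFinset] at hmP
  obtain ⟨q, hq, -⟩ := hG.existsUnique_path u m
  have hmeet : ∀ x ∈ q.support, x ∈ P.support → x = m := fun x hxq hxP ↦ by
    have hx := hG.isAcyclic.onPath_of_mem_support hq hxq
    have := hmin x (List.mem_toFinset.mpr hxP)
    rw [OnPath] at hx
    exact (hG.connected.dist_eq_zero_iff).mp (by omega)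
  refine ⟨m, hmP,
    hG.isAcyclic.onPath_of_isPath_append (p := q) (q := (P.takeUntil m hmP).reverse) ?_,
    hG.isAcyclic.onPath_of_isPath_append (p := q) (q := P.dropUntil m hmP) ?_⟩
  · refine hq.append (hP.takeUntil hmP).reverse fun x hxq hx ↦ hmeet x hxq ?_
    rw [Walk.support_reverse, List.mem_reverse] at hx
    exact P.support_takeUntil_subset_support hmP hx
  · exact hq.append (hP.dropUntil hmP) fun x hxq hx ↦
      hmeet x hxq (P.support_dropUntil_subset_support hmP hx)

/-- The four-point condition. -/
lemma IsTree.dist_add_dist_le_max (hG : G.IsTree) (a b u y : V) :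
    G.dist u y + G.dist a b ≤ max (G.dist u a + G.dist y b) (G.dist u b + G.dist y a) := by
  obtain ⟨P, hP, -⟩ := hG.existsUnique_path a b
  obtain ⟨m, hm, hma, hmb⟩ := hG.exists_mem_support_onPath hP u
  obtain ⟨n, hn, hna, hnb⟩ := hG.exists_mem_support_onPath hP y
  have hmab := hG.isAcyclic.onPath_of_mem_support hP hm
  have hnab := hG.isAcyclic.onPath_of_mem_support hP hn
  have htri : G.dist u y ≤ G.dist u m + G.dist m n + G.dist n y :=
    hG.connected.dist_triangle.trans (Nat.add_le_add_right hG.connected.dist_triangle _)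
  have := G.dist_comm (u := a) (v := m)
  have := G.dist_comm (u := a) (v := n)
  have := G.dist_comm (u := m) (v := n)
  have := G.dist_comm (u := n) (v := y)
  rcases hG.isAcyclic.onPath_or_onPath hP hm hn with h | h <;> unfold OnPath at * <;> omega

end SimpleGraph

@[simp, norm_cast]
lemma EReal.coe_max (x y : ℝ) : ((max x y : ℝ) : EReal) = max (x : EReal) y :=
  EReal.coe_strictMono.monotone.map_max

namespace SimpleGraph

variable {V : Type*}

def IsDiametral (T : SimpleGraph V) (c : V → EReal) (a b : V) : Prop :=
  ∀ a' b' : V, c a' + ((T.dist a' b' : ℝ) : EReal) + c b' ≤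
    c a + ((T.dist a b : ℝ) : EReal) + c b

noncomputable def eccentricity (T : SimpleGraph V) (c : V → EReal) (u : V) : EReal :=
  ⨆ y : V, ((T.dist u y : ℝ) : EReal) + c y

lemma IsDiametral.exists_coe {T : SimpleGraph V} {c : V → EReal} {a b : V}
    (hab : IsDiametral T c a b) (hcTop : ∀ y : V, c y ≠ ⊤) (hfin : ∃ y : V, c y ≠ ⊥) :
    ∃ A B : ℝ, c a = A ∧ c b = B := by
  obtain ⟨y, hy⟩ := hfin
  have hyy : c y + ((T.dist y y : ℝ) : EReal) + c y ≠ ⊥ := by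
    simpa [EReal.add_ne_bot_iff] using hy
  obtain ⟨hab', hb⟩ := EReal.add_ne_bot_iff.mp (ne_bot_of_le_ne_bot hyy (hab y y))
  exact ⟨_, _, (EReal.coe_toReal (hcTop a) (EReal.add_ne_bot_iff.mp hab').1).symm,
    (EReal.coe_toReal (hcTop b) hb).symm⟩

/-- `hya` and `hyb` are the diametrality of `(a, b)` against `(a, y)` and `(y, b)` when
`c a = A`, `c b = B` and `c y = C`. -/
lemma IsTree.dist_add_le_max_of_diametral {T : SimpleGraph V} (hT : T.IsTree)
    {a b y : V} {A B C : ℝ} (hya : T.dist a y + C ≤ T.dist a b + B)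
    (hyb : T.dist y b + C ≤ T.dist a b + A) (u : V) :
    T.dist u y + C ≤ max (T.dist u a + A) (T.dist u b + B) := by
  have h4 : (T.dist u y + T.dist a b : ℝ) ≤
      max (T.dist u a + T.dist y b : ℝ) (T.dist u b + T.dist y a) := by
    exact_mod_cast hT.dist_add_dist_le_max a b u y
  rw [T.dist_comm (u := y) (v := a)] at h4
  rcases le_max_iff.mp h4 with h | h
  · exact le_max_of_le_left (by linarith)
  · exact le_max_of_le_right (by linarith)

lemma IsTree.eccentricity_eq_max {T : SimpleGraph V} (hT : T.IsTree)
    {c : V → EReal} (hcTop : ∀ y : V, c y ≠ ⊤) (hfin : ∃ y : V, c y ≠ ⊥) {a b : V}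
    (hab : IsDiametral T c a b) (u : V) :
    eccentricity T c u =
      max (((T.dist u a : ℝ) : EReal) + c a) (((T.dist u b : ℝ) : EReal) + c b) := by
  refine le_antisymm (iSup_le fun y ↦ ?_)
    (max_le (le_iSup (fun y ↦ ((T.dist u y : ℝ) : EReal) + c y) a)
      (le_iSup (fun y ↦ ((T.dist u y : ℝ) : EReal) + c y) b))
  obtain ⟨A, B, hA, hB⟩ := hab.exists_coe hcTop hfin
  induction hcy : c y using EReal.rec with
  | bot => simp
  | top => exact absurd hcy (hcTop y)
  | coe C =>
    have hya : ((A + T.dist a y + C : ℝ) : EReal) ≤ ((A + T.dist a b + B : ℝ) : EReal) := by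
      simpa [hA, hB, hcy] using hab a y
    have hyb : ((C + T.dist y b + B : ℝ) : EReal) ≤ ((A + T.dist a b + B : ℝ) : EReal) := by
      simpa [hA, hB, hcy] using hab y b
    rw [EReal.coe_le_coe_iff] at hya hyb
    rw [hA, hB]
    exact_mod_cast hT.dist_add_le_max_of_diametral (C := C) (by linarith) (by linarith) u

/-- Moving from `γ` to its nearest vertex `m` on the path decreases both terms by `d(γ, m)`. -/
lemma IsTree.onPath_of_forall_max_le {T : SimpleGraph V} (hT : T.IsTree)
    {a b γ : V} {A B : ℝ}
    (hγ : ∀ u, max (T.dist γ a + A) (T.dist γ b + B) ≤ max (T.dist u a + A) (T.dist u b + B)) :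
    OnPath T a γ b := by
  obtain ⟨P, hP, -⟩ := hT.existsUnique_path a b
  obtain ⟨m, hm, hma, hmb⟩ := hT.exists_mem_support_onPath hP γ
  have hγa : (T.dist γ a : ℝ) = T.dist γ m + T.dist m a := by exact_mod_cast hma.symm
  have hγb : (T.dist γ b : ℝ) = T.dist γ m + T.dist m b := by exact_mod_cast hmb.symm
  have hshift := hγ m
  rw [hγa, hγb, add_assoc, add_assoc, max_add_add_left] at hshift
  have hγm : (T.dist γ m : ℝ) = 0 := by linarith [(T.dist γ m).cast_nonneg (α := ℝ)]
  obtain rfl : γ = m := hT.connected.dist_eq_zero_iff.mp (by exact_mod_cast hγm)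
  exact hT.isAcyclic.onPath_of_mem_support hP hm

end SimpleGraph

theorem stmt_3_general {V : Type*} (T : SimpleGraph V) (hT : T.IsTree)
    (c : V → EReal) (hcTop : ∀ y : V, c y ≠ ⊤) (hfin : ∃ y : V, c y ≠ ⊥)
    (γ a b : V)
    (hγ : ∀ u : V, (⨆ y : V, (((T.dist γ y : ℝ) : EReal) + c y)) ≤
      ⨆ y : V, (((T.dist u y : ℝ) : EReal) + c y))
    (hab : ∀ a' b' : V, c a' + ((T.dist a' b' : ℝ) : EReal) + c b' ≤
      c a + ((T.dist a b : ℝ) : EReal) + c b) :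
    OnPath T a γ b ∧
    ∀ u : V, OnPath T a u b →
      max (((T.dist γ a : ℝ) : EReal) + c a) (((T.dist γ b : ℝ) : EReal) + c b) ≤
        max (((T.dist u a : ℝ) : EReal) + c a) (((T.dist u b : ℝ) : EReal) + c b) := by
  have hdiam : IsDiametral T c a b := hab
  have hcenter : ∀ u,
      max (((T.dist γ a : ℝ) : EReal) + c a) (((T.dist γ b : ℝ) : EReal) + c b) ≤
      max (((T.dist u a : ℝ) : EReal) + c a) (((T.dist u b : ℝ) : EReal) + c b) := fun u ↦ by
    rw [← hT.eccentricity_eq_max hcTop hfin hdiam, ← hT.eccentricity_eq_max hcTop hfin hdiam]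
    exact hγ u
  refine ⟨?_, fun u _ ↦ hcenter u⟩
  obtain ⟨A, B, hA, hB⟩ := hdiam.exists_coe hcTop hfin
  refine hT.onPath_of_forall_max_le (A := A) (B := B) fun u ↦ ?_
  have h := hcenter u
  rw [hA, hB] at h
  exact_mod_cast h

/-- If `γ` is a center of `T` w.r.t. `c` and `a, b` are the endpoints of
a diametral path `P` of `T` w.r.t. `c`, then `γ` is a center of `P`: it lies on the path
between `a` and `b` and it minimizes `max{d_T(u,a)+c(a), d_T(u,b)+c(b)}` over the
vertices `u` of `P`. -/
theorem stmt_3 {V : Type*} [Fintype V] [Nonempty V] (T : SimpleGraph V) (hT : T.IsTree)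
    (c : V → EReal) (hcTop : ∀ y : V, c y ≠ ⊤) (hfin : ∃ y : V, c y ≠ ⊥)
    (γ a b : V)
    (hγ : ∀ u : V, (⨆ y : V, (((T.dist γ y : ℝ) : EReal) + c y)) ≤
      ⨆ y : V, (((T.dist u y : ℝ) : EReal) + c y))
    (hab : ∀ a' b' : V, c a' + ((T.dist a' b' : ℝ) : EReal) + c b' ≤
      c a + ((T.dist a b : ℝ) : EReal) + c b) :
    OnPath T a γ b ∧
    ∀ u : V, OnPath T a u b →
      max (((T.dist γ a : ℝ) : EReal) + c a) (((T.dist γ b : ℝ) : EReal) + c b) ≤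
        max (((T.dist u a : ℝ) : EReal) + c a) (((T.dist u b : ℝ) : EReal) + c b) :=
  stmt_3_general T hT c hcTop hfin γ a b hγ hab
end

section
/- Let a', b' be the two endpoints of a diametral path of T w.r.t. a cost function c', let t be a vertex on the path between a' and b' (so d_T(a',b') = d_T(a',t) + d_T(t,b')), and let a be any vertex whose path to b' passes through t, i.e., d_T(a, b') = d_T(a, t) + d_T(t, b'). Then c'(a) + d_T(a, t) ≤ c'(a') + d_T(a', t). -/
/-!
Both `a` and `a'` reach `b'` through `t`, so comparing the pair `(a, b')` with the diametral
pair `(a', b')` gives `c'(a) + d(a,t) + (d(t,b') + c'(b')) ≤ c'(a') + d(a',t) + (d(t,b') + c'(b'))`,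
and the common summand cancels as soon as `c'(b')` is finite. If `c'(b') = ⊥`, the diametral
value is `⊥`, and the pair `(a, a)` forces `c'(a) = ⊥`.
-/

open SimpleGraph

theorem stmt_7_general {V : Type*} (T : SimpleGraph V)
    (c' : V → EReal) (hcTop : ∀ y : V, c' y ≠ ⊤)
    (a' b' a t : V)
    (hdiam : ∀ u w : V, c' u + ((T.dist u w : ℝ) : EReal) + c' w ≤
      c' a' + ((T.dist a' b' : ℝ) : EReal) + c' b')
    (ht : T.dist a' b' = T.dist a' t + T.dist t b')
    (ha : T.dist a b' = T.dist a t + T.dist t b') :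
    c' a + ((T.dist a t : ℝ) : EReal) ≤ c' a' + ((T.dist a' t : ℝ) : EReal) := by
  by_cases hb : c' b' = ⊥
  · have ha_bot := hdiam a a
    simp only [hb, EReal.add_bot, le_bot_iff, dist_self, CharP.cast_eq_zero, EReal.coe_zero,
      add_zero, EReal.add_eq_bot_iff, or_self] at ha_bot
    simp [ha_bot]
  · lift c' b' to ℝ using ⟨hcTop b', hb⟩ with r hr
    have hpair := hdiam a b'
    rw [ha, ht, ← hr] at hpair
    have regroup : ∀ x : V, ∀ n : ℕ, c' x + ((n + T.dist t b' : ℕ) : ℝ) + (r : EReal) =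
        (c' x + ((n : ℝ) : EReal)) + ((T.dist t b' + r : ℝ) : EReal) := by
      intro x n
      push_cast
      rw [add_assoc, add_assoc, add_assoc]
    rw [regroup, regroup] at hpair
    exact (EReal.addLECancellable_coe _).add_le_add_iff_right.1 hpair

/-- If `a', b'` are the endpoints of a diametral path of `T` w.r.t. `c'`,
`t` lies on the path between `a'` and `b'`, and the path from `a` to `b'` passes through
`t`, then `c'(a) + d_T(a,t) ≤ c'(a') + d_T(a',t)`. -/
theorem stmt_7 {V : Type*} [Fintype V] (T : SimpleGraph V) (hT : T.IsTree)
    (c' : V → EReal) (hcTop : ∀ y : V, c' y ≠ ⊤)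
    (a' b' a t : V)
    (hdiam : ∀ u w : V, c' u + ((T.dist u w : ℝ) : EReal) + c' w ≤
      c' a' + ((T.dist a' b' : ℝ) : EReal) + c' b')
    (ht : T.dist a' b' = T.dist a' t + T.dist t b')
    (ha : T.dist a b' = T.dist a t + T.dist t b') :
    c' a + ((T.dist a t : ℝ) : EReal) ≤ c' a' + ((T.dist a' t : ℝ) : EReal) :=
  stmt_7_general T c' hcTop a' b' a t hdiam ht ha
end

section
/- Fix a vertex x of T and let r = z_1, …, z_h be the proper ancestors of x in root-to-x order (so d_T(z_s, z_{s'}) = |s − s'|). Let the failing edge be e = (z_i, v) where v is the child of z_i on the path to x, so that Y(x,e) = ⋃_{k=1,…,i} Y(x|z_k); assume Y(x,e) ≠ ∅. Let γ_x be a vertex with lca(γ_x, x) = z_j for some j ∈ {1,…,i}. Let t' minimize d_T(λ(z_s), z_s) − s over s ∈ {1,…,j−1} with Y(x|z_s) ≠ ∅, and let t minimize d_T(λ(z_s), z_s) + s over s ∈ {j+1,…,i} with Y(x|z_s) ≠ ∅ (either may be undefined if the range contains no such s). If y_x minimizes d_T(y, γ_x) over the defined candidates y ∈ {λ(γ_x),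 λ(z_{t'}), λ(z_t)} (where λ(γ_x) is defined only if Y(x|z_j) ≠ ∅), then y_x minimizes d_T(y, γ_x) over all y ∈ Y(x,e). -/
open SimpleGraph

/-- `z` is a proper ancestor of `y` in the tree `T` rooted at `r`. -/
def ProperAncestor {V : Type*} (T : SimpleGraph V) (r z y : V) : Prop :=
  z ≠ y ∧ OnPath T r z y

/-- `S(e)`: the set of swap edges of a tree edge `e`, i.e. the edges of `G` other than `e`
whose endpoints lie in different connected components of `T - e`. -/
def swapEdges {V : Type*} (G T : SimpleGraph V) (e : Sym2 V) : Set (Sym2 V) :=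
  {f | f ∈ G.edgeSet ∧ f ≠ e ∧
    ∃ x y : V, f = s(x, y) ∧ ¬ (T.deleteEdges {e}).Reachable x y}

/-- `E(x)`: the set of non-tree edges of the form `(x,y)` where `x` is not a proper
ancestor of `y` in `T` rooted at `r`. -/
def candEdges {V : Type*} (G T : SimpleGraph V) (r x : V) : Set (Sym2 V) :=
  {f | f ∈ G.edgeSet ∧ f ∉ T.edgeSet ∧
    ∃ y : V, f = s(x, y) ∧ ¬ ProperAncestor T r x y}

/-- `T_{e/f}`: the swap tree obtained from `T` by replacing `e` with `f`. -/
def swapTree {V : Type*} (T : SimpleGraph V) (e f : Sym2 V) : SimpleGraph V :=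
  SimpleGraph.fromEdgeSet ((T.edgeSet \ {e}) ∪ {f})

/-- The stretch factor `σ_H(T')` of a spanning tree `T'` of `H`. -/
noncomputable def stretch {V : Type*} (H T' : SimpleGraph V) : ℝ :=
  sSup {q : ℝ | ∃ x y : V, x ≠ y ∧ q = (T'.dist x y : ℝ) / (H.dist x y : ℝ)}

/-- `w` is the least common ancestor of `u` and `v` in the tree `T` rooted at `r`:
`w` lies on the paths from `r` to `u`, from `r` to `v`, and from `u` to `v`. -/
def IsLCA {V : Type*} (T : SimpleGraph V) (r u v w : V) : Prop :=
  T.dist r u = T.dist r w + T.dist w u ∧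
  T.dist r v = T.dist r w + T.dist w v ∧
  T.dist u v = T.dist u w + T.dist w v

/-!
Write `a = z s` for the ancestor at which `y ∈ Y(x|z s)` branches off the root-to-`x` path and
`b = z j` for the one at which `γ` does. If `a ≠ b`, the tree path from `y` to `γ` runs through
both, so `d(y, γ) = d(y, a) + |s - j| + d(b, γ)`. For `s < j` the only part depending on `y` and
`s` is `d(y, z s) - s`, which over `Y(x|z s)` is minimised by `λ(z s)` and then over `s` by
`t'`; symmetrically `d(y, z s) + s` is minimised by `λ(z t)` for `s > j`, and for `s = j` the
label `λ(γ)` is closest to `γ` by its choice. So each `y ∈ Y(x,e)` is at least as far from `γ`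
as some candidate.
-/

section TreeMetric

variable {V : Type*} {T : SimpleGraph V}

theorem OnPath.symm {u a v : V} (h : OnPath T u a v) : OnPath T v a u := by
  have h₁ : T.dist v a = T.dist a v := dist_comm
  have h₂ : T.dist a u = T.dist u a := dist_comm
  have h₃ : T.dist v u = T.dist u v := dist_comm
  unfold OnPath at *
  omega

theorem OnPath.tail (hT : T.Connected) {u a b w : V} (h₁ : OnPath T u a b)
    (h₂ : OnPath T u b w) : OnPath T a b w := by
  unfold OnPath at *
  have : T.dist u w ≤ T.dist u a + T.dist a w := hT.dist_triangle
  have : T.dist a w ≤ T.dist a b + T.dist b w := hT.dist_triangle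
  omega

theorem SimpleGraph.IsAcyclic.length_eq_dist_s9 (hT : T.IsAcyclic) {u v : V} {p : T.Walk u v}
    (hp : p.IsPath) : p.length = T.dist u v := by
  obtain ⟨q, hq, hql⟩ := p.reachable.exists_path_of_dist
  obtain rfl : p = q :=
    congrArg Subtype.val ((hT.subsingleton_path u v).elim ⟨p, hp⟩ ⟨q, hq⟩)
  exact hql

theorem SimpleGraph.IsAcyclic.onPath_of_mem_support_s9 [DecidableEq V] (hT : T.IsAcyclic)
    {u a v : V} {p : T.Walk u v} (hp : p.IsPath) (ha : a ∈ p.support) : OnPath T u a v := by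
  have hlen := congrArg Walk.length (p.take_spec ha)
  rw [Walk.length_append, hT.length_eq_dist_s9 (hp.takeUntil ha),
    hT.length_eq_dist_s9 (hp.dropUntil ha), hT.length_eq_dist_s9 hp] at hlen
  exact hlen

theorem SimpleGraph.IsTree.mem_support_of_onPath (hT : T.IsTree) {u a v : V}
    (h : OnPath T u a v) {p : T.Walk u v} (hp : p.IsPath) : a ∈ p.support := by
  obtain ⟨p₁, -, hp₁⟩ := hT.connected.exists_path_of_dist u a
  obtain ⟨p₂, -, hp₂⟩ := hT.connected.exists_path_of_dist a v
  have hpath : (p₁.append p₂).IsPath := by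
    refine Walk.isPath_of_length_eq_dist _ ?_
    rw [Walk.length_append, hp₁, hp₂]
    exact h
  obtain rfl : p = p₁.append p₂ :=
    congrArg Subtype.val ((hT.isAcyclic.subsingleton_path u v).elim ⟨p, hp⟩ ⟨_, hpath⟩)
  rw [Walk.mem_support_append_iff]
  exact Or.inl p₁.end_mem_support

theorem SimpleGraph.IsAcyclic.onPath_or_onPath_s9 [DecidableEq V] (hT : T.IsAcyclic)
    {u a c v : V} {p : T.Walk u v} (hp : p.IsPath) (ha : a ∈ p.support) (hc : c ∈ p.support) :
    OnPath T u c a ∨ OnPath T a c v := by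
  rw [← p.take_spec ha, Walk.mem_support_append_iff] at hc
  exact hc.imp (hT.onPath_of_mem_support_s9 (hp.takeUntil ha))
    (hT.onPath_of_mem_support_s9 (hp.dropUntil ha))

theorem SimpleGraph.IsTree.onPath_extend (hT : T.IsTree) {y a b w : V} (hab : a ≠ b)
    (hyab : OnPath T y a b) (habw : OnPath T a b w) : OnPath T y b w := by
  classical
  have hconn := hT.connected
  obtain ⟨P, hP, hPl⟩ := hconn.exists_path_of_dist y b
  obtain ⟨Q, hQ, hQl⟩ := hconn.exists_path_of_dist b w
  suffices hPQ : (P.append Q).IsPath by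
    have hlen := hT.isAcyclic.length_eq_dist_s9 hPQ
    rwa [Walk.length_append, hPl, hQl] at hlen
  -- a vertex `c ≠ b` common to both paths would make the geodesic `a–b–w` double back
  rw [Walk.isPath_def, Walk.support_append]
  refine hP.support_nodup.append hQ.support_nodup.tail fun c hcP hcQ => ?_
  have hcb : c ≠ b := by
    rintro rfl
    have hnd := hQ.support_nodup
    rw [← Q.cons_tail_support] at hnd
    exact (List.nodup_cons.mp hnd).1 hcQ
  have hbcw := hT.isAcyclic.onPath_of_mem_support_s9 hQ (List.mem_of_mem_tail hcQ)
  have hycb := hT.isAcyclic.onPath_of_mem_support_s9 hP hcP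
  have haw : T.dist a w ≤ T.dist a c + T.dist c w := hconn.dist_triangle
  have hca : T.dist c a = T.dist a c := dist_comm
  have hcb' : T.dist c b = T.dist b c := dist_comm
  rcases hT.isAcyclic.onPath_or_onPath_s9 hP (hT.mem_support_of_onPath hyab hP) hcP with hyca | hacb
    <;> unfold OnPath at *
  · exact hab (hconn.dist_eq_zero_iff.mp (by omega))
  · exact hcb (hconn.dist_eq_zero_iff.mp (by omega)).symm

theorem SimpleGraph.IsTree.dist_eq_of_isLCA (hT : T.IsTree) {r x a b y w : V} (hab : a ≠ b)
    (hrab : OnPath T r a b) (hy : IsLCA T r x y a) (hw : IsLCA T r x w b) :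
    T.dist y w = T.dist y a + T.dist a b + T.dist b w := by
  have habx : OnPath T a b x := hrab.tail hT.connected hw.1.symm
  have habw : OnPath T a b w := hrab.tail hT.connected hw.2.1.symm
  have hyab : OnPath T y a b := (habx.symm.tail hT.connected hy.2.2.symm).symm
  have hybw := hT.onPath_extend hab hyab habw
  unfold OnPath at hyab hybw
  omega

section AncestorChain

variable {r x y w γ : V} {z : ℕ → V} {h j s t : ℕ}

theorem dist_eq_of_isLCA_of_lt (hT : T.IsTree) (hz1 : z 1 = r)
    (hdist : ∀ s s', 1 ≤ s → s ≤ s' → s' ≤ h → T.dist (z s) (z s') = s' - s)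
    (hs : 1 ≤ s) (hst : s < t) (hth : t ≤ h)
    (hy : IsLCA T r x y (z s)) (hw : IsLCA T r x w (z t)) :
    T.dist y w = T.dist y (z s) + (t - s) + T.dist (z t) w := by
  have hst_dist := hdist s t hs hst.le hth
  have hrs := hdist 1 s le_rfl hs (hst.le.trans hth)
  have hrt := hdist 1 t le_rfl (hs.trans hst.le) hth
  rw [hz1] at hrs hrt
  have hne : z s ≠ z t := fun heq => by rw [heq, dist_self] at hst_dist; omega
  rw [hT.dist_eq_of_isLCA hne (by unfold OnPath; omega) hy hw, hst_dist]

theorem dist_le_dist_of_isLCA_of_lt (hT : T.IsTree) (hz1 : z 1 = r)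
    (hdist : ∀ s s', 1 ≤ s → s ≤ s' → s' ≤ h → T.dist (z s) (z s') = s' - s)
    (hs : 1 ≤ s) (hsj : s < j) (ht : 1 ≤ t) (htj : t < j) (hjh : j ≤ h)
    (hy : IsLCA T r x y (z s)) (hw : IsLCA T r x w (z t)) (hγ : IsLCA T r x γ (z j))
    (hkey : (T.dist w (z t) : ℤ) - t ≤ T.dist y (z s) - s) :
    T.dist w γ ≤ T.dist y γ := by
  have hwγ := dist_eq_of_isLCA_of_lt hT hz1 hdist ht htj hjh hw hγ
  have hyγ := dist_eq_of_isLCA_of_lt hT hz1 hdist hs hsj hjh hy hγ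
  omega

theorem dist_le_dist_of_isLCA_of_gt (hT : T.IsTree) (hz1 : z 1 = r)
    (hdist : ∀ s s', 1 ≤ s → s ≤ s' → s' ≤ h → T.dist (z s) (z s') = s' - s)
    (hj : 1 ≤ j) (hjs : j < s) (hsh : s ≤ h) (hjt : j < t) (hth : t ≤ h)
    (hy : IsLCA T r x y (z s)) (hw : IsLCA T r x w (z t)) (hγ : IsLCA T r x γ (z j))
    (hkey : (T.dist w (z t) : ℤ) + t ≤ T.dist y (z s) + s) :
    T.dist w γ ≤ T.dist y γ := by
  have hγw := dist_eq_of_isLCA_of_lt hT hz1 hdist hj hjt hth hγ hw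
  have hγy := dist_eq_of_isLCA_of_lt hT hz1 hdist hj hjs hsh hγ hy
  rw [dist_comm (u := γ), dist_comm (u := z t)] at hγw
  rw [dist_comm (u := γ), dist_comm (u := z s)] at hγy
  omega

end AncestorChain

end TreeMetric

theorem stmt_9_general {V : Type*} (G T : SimpleGraph V) (r : V)
    (hT : T.IsTree)
    (x : V) (h i j : ℕ) (z : ℕ → V)
    (hz1 : z 1 = r)
    (hanc : ∀ s, 1 ≤ s → s ≤ h → ProperAncestor T r (z s) x)
    (hdist : ∀ s s', 1 ≤ s → s ≤ s' → s' ≤ h → T.dist (z s) (z s') = s' - s)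
    (hj1 : 1 ≤ j) (hji : j ≤ i) (hih : i ≤ h)
    (Yz : ℕ → Set V)
    (hYz : ∀ s, Yz s = {y : V | s(x, y) ∈ candEdges G T r x ∧ IsLCA T r x y (z s)})
    (Yxe : Set V)
    (hUnion : Yxe = ⋃ s ∈ Finset.Icc 1 i, Yz s)
    (γ : V) (hγ : IsLCA T r x γ (z j))
    (lab : V → V)
    (hlab : ∀ s, 1 ≤ s → s ≤ h → (Yz s).Nonempty →
      ∀ y' : V, IsLCA T r x y' (z s) →
        lab y' ∈ Yz s ∧ ∀ y ∈ Yz s, T.dist (lab y') y' ≤ T.dist y y')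
    (t t' : ℕ)
    (ht' : (∃ s, 1 ≤ s ∧ s < j ∧ (Yz s).Nonempty) →
      1 ≤ t' ∧ t' < j ∧ (Yz t').Nonempty ∧
      ∀ s, 1 ≤ s → s < j → (Yz s).Nonempty →
        (T.dist (lab (z t')) (z t') : ℤ) - (t' : ℤ) ≤
          (T.dist (lab (z s)) (z s) : ℤ) - (s : ℤ))
    (ht : (∃ s, j < s ∧ s ≤ i ∧ (Yz s).Nonempty) →
      j < t ∧ t ≤ i ∧ (Yz t).Nonempty ∧
      ∀ s, j < s → s ≤ i → (Yz s).Nonempty →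
        (T.dist (lab (z t)) (z t) : ℤ) + (t : ℤ) ≤
          (T.dist (lab (z s)) (z s) : ℤ) + (s : ℤ))
    (cand : Set V)
    (hcand : cand = {w : V | ((Yz j).Nonempty ∧ w = lab γ) ∨
      ((∃ s, 1 ≤ s ∧ s < j ∧ (Yz s).Nonempty) ∧ w = lab (z t')) ∨
      ((∃ s, j < s ∧ s ≤ i ∧ (Yz s).Nonempty) ∧ w = lab (z t))})
    (yx : V) (hyxc : yx ∈ cand) (hyx : ∀ w ∈ cand, T.dist yx γ ≤ T.dist w γ) :
    yx ∈ Yxe ∧ ∀ y ∈ Yxe, T.dist yx γ ≤ T.dist y γ := by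
  have hlca : ∀ s, ∀ y ∈ Yz s, IsLCA T r x y (z s) := fun s y hy => by
    rw [hYz] at hy
    exact hy.2
  have hlab_anc : ∀ s, 1 ≤ s → s ≤ h → ∀ y ∈ Yz s,
      lab (z s) ∈ Yz s ∧ T.dist (lab (z s)) (z s) ≤ T.dist y (z s) := fun s hs hsh y hy =>
    have hzs : IsLCA T r x (z s) (z s) := ⟨Eq.symm (hanc s hs hsh).2, by simp, by simp⟩
    ⟨(hlab s hs hsh ⟨y, hy⟩ _ hzs).1, (hlab s hs hsh ⟨y, hy⟩ _ hzs).2 y hy⟩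
  have hmem : ∀ s, 1 ≤ s → s ≤ i → ∀ y ∈ Yz s, y ∈ Yxe := fun s hs hsi y hy =>
    hUnion ▸ Set.mem_biUnion (Finset.mem_coe.mpr (Finset.mem_Icc.mpr ⟨hs, hsi⟩)) hy
  rw [hcand] at hyxc hyx
  refine ⟨?_, fun y hy => ?_⟩
  · rcases hyxc with ⟨⟨y, hy⟩, rfl⟩ | ⟨hex, rfl⟩ | ⟨hex, rfl⟩
    · exact hmem j hj1 hji _ (hlab j hj1 (hji.trans hih) ⟨y, hy⟩ γ hγ).1
    · obtain ⟨ht1, htj, ⟨y, hy⟩, -⟩ := ht' hex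
      exact hmem t' ht1 (by omega) _ (hlab_anc t' ht1 (by omega) y hy).1
    · obtain ⟨hjt, hti, ⟨y, hy⟩, -⟩ := ht hex
      exact hmem t (by omega) hti _ (hlab_anc t (by omega) (by omega) y hy).1
  rw [hUnion] at hy
  obtain ⟨s, hs, hys⟩ := Set.mem_iUnion₂.mp hy
  obtain ⟨hs1, hsi⟩ := Finset.mem_Icc.mp hs
  have hys_le := (hlab_anc s hs1 (by omega) y hys).2
  rcases lt_trichotomy s j with hsj | rfl | hjs
  · have hex : ∃ s, 1 ≤ s ∧ s < j ∧ (Yz s).Nonempty := ⟨s, hs1, hsj, y, hys⟩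
    obtain ⟨ht1, htj, ⟨y', hy'⟩, hmin⟩ := ht' hex
    have hkey := hmin s hs1 hsj ⟨y, hys⟩
    have hw := hlca t' _ (hlab_anc t' ht1 (by omega) y' hy').1
    calc T.dist yx γ ≤ T.dist (lab (z t')) γ := hyx _ (Or.inr (Or.inl ⟨hex, rfl⟩))
      _ ≤ T.dist y γ := dist_le_dist_of_isLCA_of_lt hT hz1 hdist hs1 hsj ht1 htj (by omega)
          (hlca s y hys) hw hγ (by omega)
  · calc T.dist yx γ ≤ T.dist (lab γ) γ := hyx _ (Or.inl ⟨⟨y, hys⟩, rfl⟩)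
      _ ≤ T.dist y γ := (hlab s hj1 (by omega) ⟨y, hys⟩ γ hγ).2 y hys
  · have hex : ∃ s, j < s ∧ s ≤ i ∧ (Yz s).Nonempty := ⟨s, hjs, hsi, y, hys⟩
    obtain ⟨hjt, hti, ⟨y', hy'⟩, hmin⟩ := ht hex
    have hkey := hmin s hjs hsi ⟨y, hys⟩
    have hw := hlca t _ (hlab_anc t (by omega) (by omega) y' hy').1
    calc T.dist yx γ ≤ T.dist (lab (z t)) γ := hyx _ (Or.inr (Or.inr ⟨hex, rfl⟩))
      _ ≤ T.dist y γ := dist_le_dist_of_isLCA_of_gt hT hz1 hdist hj1 hjs (by omega) hjt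
          (by omega) (hlca s y hys) hw hγ (by omega)

/-- With `z 1, …, z h` the proper ancestors of `x` in root-to-`x` order,
failing edge `e = (z i, v)`, `γ_x` with `lca(γ_x, x) = z j`, labels `λ`, and `t', t` the
argmins of `d_T(λ(z s), z s) ∓ s` over the nonempty ranges `[1, j-1]` and `[j+1, i]`:
any `y_x` minimizing `d_T(y, γ_x)` over the defined candidates
`{λ(γ_x), λ(z t'), λ(z t)}` minimizes `d_T(y, γ_x)` over all of `Y(x,e)`. -/
theorem stmt_9 {V : Type*} [Fintype V] (G T : SimpleGraph V) (r : V)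
    (hT : T.IsTree) (hsub : T ≤ G)
    (x : V) (h i j : ℕ) (z : ℕ → V)
    (hz1 : z 1 = r)
    (hanc : ∀ s, 1 ≤ s → s ≤ h → ProperAncestor T r (z s) x)
    (hall : ∀ w : V, ProperAncestor T r w x → ∃ s, 1 ≤ s ∧ s ≤ h ∧ z s = w)
    (hdist : ∀ s s', 1 ≤ s → s ≤ s' → s' ≤ h → T.dist (z s) (z s') = s' - s)
    (hj1 : 1 ≤ j) (hji : j ≤ i) (hih : i ≤ h)
    (v : V) (e : Sym2 V) (he : e = s(z i, v))
    (hv : T.Adj (z i) v ∧ OnPath T r v x)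
    (Yz : ℕ → Set V)
    (hYz : ∀ s, Yz s = {y : V | s(x, y) ∈ candEdges G T r x ∧ IsLCA T r x y (z s)})
    (Yxe : Set V)
    (hYxe : Yxe = {y : V | s(x, y) ∈ candEdges G T r x ∩ swapEdges G T e})
    (hUnion : Yxe = ⋃ s ∈ Finset.Icc 1 i, Yz s)
    (hne : Yxe.Nonempty)
    (γ : V) (hγ : IsLCA T r x γ (z j))
    (lab : V → V)
    (hlab : ∀ s, 1 ≤ s → s ≤ h → (Yz s).Nonempty →
      ∀ y' : V, IsLCA T r x y' (z s) →
        lab y' ∈ Yz s ∧ ∀ y ∈ Yz s, T.dist (lab y') y' ≤ T.dist y y')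
    (t t' : ℕ)
    (ht' : (∃ s, 1 ≤ s ∧ s < j ∧ (Yz s).Nonempty) →
      1 ≤ t' ∧ t' < j ∧ (Yz t').Nonempty ∧
      ∀ s, 1 ≤ s → s < j → (Yz s).Nonempty →
        (T.dist (lab (z t')) (z t') : ℤ) - (t' : ℤ) ≤
          (T.dist (lab (z s)) (z s) : ℤ) - (s : ℤ))
    (ht : (∃ s, j < s ∧ s ≤ i ∧ (Yz s).Nonempty) →
      j < t ∧ t ≤ i ∧ (Yz t).Nonempty ∧
      ∀ s, j < s → s ≤ i → (Yz s).Nonempty →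
        (T.dist (lab (z t)) (z t) : ℤ) + (t : ℤ) ≤
          (T.dist (lab (z s)) (z s) : ℤ) + (s : ℤ))
    (cand : Set V)
    (hcand : cand = {w : V | ((Yz j).Nonempty ∧ w = lab γ) ∨
      ((∃ s, 1 ≤ s ∧ s < j ∧ (Yz s).Nonempty) ∧ w = lab (z t')) ∨
      ((∃ s, j < s ∧ s ≤ i ∧ (Yz s).Nonempty) ∧ w = lab (z t))})
    (yx : V) (hyxc : yx ∈ cand) (hyx : ∀ w ∈ cand, T.dist yx γ ≤ T.dist w γ) :
    yx ∈ Yxe ∧ ∀ y ∈ Yxe, T.dist yx γ ≤ T.dist y γ :=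
  stmt_9_general G T r hT x h i j z hz1 hanc hdist hj1 hji hih Yz hYz Yxe hUnion γ hγ lab hlab t t'
    ht' ht cand hcand yx hyxc hyx
end
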